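/- For n ≥ k, the finite k-bonacci word satisfies W_n^(k) = W_{n-1}^(k) W_{n-2}^(k) ... W_{n-k+1}^(k) (k ⊕ W_{n-k}^(k)), where k ⊕ U denotes the word obtained from U by adding k to each digit. -/

import Mathlib

def kbon (k : ℕ) (n : ℕ) : ℕ :=
  if _h1 : n < k - 1 then 0
  else if _h2 : n = k - 1 then 1
  else ∑ i ∈ Finset.range k, kbon k (n - i - 1)
termination_by n
decreasing_by omega

/-- The k-bonacci morphism on words over ℕ. -/
def phiW (k : ℕ) (w : List ℕ) : List ℕ :=
  w.flatMap (fun a => if a % k = k - 1 then [a + 1] else [k * (a / k), a + 1])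

/-- The finite k-bonacci word over the infinite alphabet ℕ. -/
def W (k n : ℕ) : List ℕ := (phiW k)^[n] [0]

/-! Induction on `n`: applying `φ_k` to `W_n = W_{n-1} ⋯ W_{n-k+1} (k ⊕ W_{n-k})` sends each factor
`W_j` to `W_{j+1}`, and `φ_k` commutes with `k ⊕ ·` because it sees a letter only through its residue
and its quotient mod `k`. The base case `n = k` comes from `W_m = W_{m-1} ⋯ W_0 m` for `m < k`, whose
last letter `k - 1` is sent to `k = k ⊕ W_0`. -/

section Morphism

variable (k : ℕ)

lemma phiW_append (u v : List ℕ) : phiW k (u ++ v) = phiW k u ++ phiW k v :=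
  List.flatMap_append

lemma phiW_flatten (L : List (List ℕ)) : phiW k L.flatten = (L.map (phiW k)).flatten := by
  induction L with
  | nil => rfl
  | cons u L ih => rw [List.flatten_cons, phiW_append, ih, List.map_cons, List.flatten_cons]

lemma phiW_singleton_of_mod_eq {a : ℕ} (h : a % k = k - 1) : phiW k [a] = [a + 1] := by
  simp [phiW, h]

lemma phiW_singleton_of_succ_lt {a : ℕ} (h : a + 1 < k) : phiW k [a] = [0, a + 1] := by
  have hmod : a % k = a := Nat.mod_eq_of_lt (by omega)
  simp [phiW, hmod, Nat.div_eq_of_lt (show a < k by omega)]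
  omega

lemma phiW_map_add_self (hk : 0 < k) (w : List ℕ) :
    phiW k (w.map (· + k)) = (phiW k w).map (· + k) := by
  induction w with
  | nil => rfl
  | cons a t ih =>
    rw [List.map_cons, ← List.singleton_append, phiW_append, ih, ← List.singleton_append (l := t),
      phiW_append, List.map_append]
    by_cases h : a % k = k - 1 <;>
      simp [phiW, h, Nat.add_div_right a hk, Nat.mul_succ, Nat.add_right_comm]

lemma W_zero : W k 0 = [0] := rfl

lemma W_succ (n : ℕ) : W k (n + 1) = phiW k (W k n) :=
  Function.iterate_succ_apply' _ _ _

lemma phiW_flatten_range_W {n j : ℕ} (h : j ≤ n) :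
    phiW k ((List.range j).map (fun i => W k (n - 1 - i))).flatten
      = ((List.range j).map (fun i => W k (n - i))).flatten := by
  rw [phiW_flatten, List.map_map]
  congr 1
  refine List.map_congr_left fun i hi => ?_
  rw [List.mem_range] at hi
  rw [Function.comp_apply, ← W_succ, show n - 1 - i + 1 = n - i by omega]

lemma W_of_lt {m : ℕ} (hm : m < k) :
    W k m = ((List.range m).map (fun i => W k (m - 1 - i))).flatten ++ [m] := by
  induction m with
  | zero => rfl
  | succ m ih =>
    rw [W_succ, ih (by omega), phiW_append, phiW_flatten_range_W k le_rfl,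
      phiW_singleton_of_succ_lt k hm, List.range_succ, List.map_append, List.flatten_append]
    simp [W_zero]

end Morphism

theorem W_recurrence (k n : ℕ) (hk : 2 < k) (hn : k ≤ n) :
    W k n = (((List.range (k - 1)).map (fun i => W k (n - 1 - i))).flatten)
      ++ (W k (n - k)).map (· + k) := by
  induction n, hn using Nat.le_induction with
  | base =>
    obtain ⟨m, rfl⟩ : ∃ m, k = m + 1 := ⟨k - 1, by omega⟩
    have hlast : m % (m + 1) = m + 1 - 1 := by
      rw [Nat.mod_eq_of_lt (Nat.lt_succ_self m), Nat.add_sub_cancel]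
    rw [W_succ, W_of_lt _ (Nat.lt_succ_self m), phiW_append, phiW_flatten_range_W _ le_rfl,
      phiW_singleton_of_mod_eq _ hlast, Nat.add_sub_cancel, Nat.sub_self, W_zero, List.map_singleton,
      Nat.zero_add]
  | succ n hn ih =>
    rw [W_succ, ih, phiW_append, phiW_flatten_range_W k (by omega),
      phiW_map_add_self k (by omega), ← W_succ, Nat.sub_add_comm hn]
    rfl
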